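/- Let q > 0, q ≠ 1, let n ∈ ℕ, let a,b,c be nonzero complex numbers, and let x ∈ ℂ. Then, as the real parameter d tends to +∞, p_n(x;a,b,c,d|q)/(ad;q)_n converges to (bc)^n q^{n(n−1)} p_n(x;a^{−1},b^{−1},c^{−1}|q^{−1}), where p_n(x;a,b,c|q) denotes the continuous dual q-Hahn polynomial. -/

import Mathlib

set_option autoImplicit false
set_option maxHeartbeats 1000000

open Finset Filter

/-- q-shifted factorial `(t;q)_n`. -/
noncomputable def qPoch (q t : ℂ) (n : ℕ) : ℂ := ∏ j ∈ Finset.range n, (1 - t * q ^ j)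

/-- For `x = cos θ`, a root `e^{iθ}` of `z² - 2xz + 1 = 0`. -/
noncomputable def awz (x : ℂ) : ℂ := x + (x ^ 2 - 1) ^ ((1 : ℂ) / 2)

/-- The Askey–Wilson polynomial `p_n(x;a,b,c,d|q)`. -/
noncomputable def askeyWilson (q a b c d : ℂ) (n : ℕ) (x : ℂ) : ℂ :=
  (a ^ n)⁻¹ * qPoch q (a * b) n * qPoch q (a * c) n * qPoch q (a * d) n *
    ∑ k ∈ Finset.range (n + 1),
      (qPoch q ((q ^ n)⁻¹) k * qPoch q (a * b * c * d * q ^ n * q⁻¹) k *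
          qPoch q (a * awz x) k * qPoch q (a * (awz x)⁻¹) k * q ^ k) /
        (qPoch q (a * b) k * qPoch q (a * c) k * qPoch q (a * d) k * qPoch q q k)

/-- The continuous dual q-Hahn polynomial `p_n(x;a,b,c|q)`. -/
noncomputable def dualQHahn (q a b c : ℂ) (n : ℕ) (x : ℂ) : ℂ :=
  (a ^ n)⁻¹ * qPoch q (a * b) n * qPoch q (a * c) n *
    ∑ k ∈ Finset.range (n + 1),
      (qPoch q ((q ^ n)⁻¹) k * qPoch q (a * awz x) k * qPoch q (a * (awz x)⁻¹) k * q ^ k) /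
        (qPoch q (a * b) k * qPoch q (a * c) k * qPoch q q k)

lemma qPoch_inv_eq (q t : ℂ) (hq : q ≠ 0) (ht : t ≠ 0) (k : ℕ) :
    qPoch q⁻¹ t k = (-1)^k * t^k * (∏ j ∈ Finset.range k, q ^ j)⁻¹ * qPoch q t⁻¹ k := by
  have hc : ((-1:ℂ)^k * t^k : ℂ) = ∏ _j ∈ Finset.range k, (-t) := by
    rw [Finset.prod_const, Finset.card_range, ← neg_pow]
  rw [qPoch, qPoch, ← Finset.prod_inv_distrib, hc,
    ← Finset.prod_mul_distrib, ← Finset.prod_mul_distrib]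
  refine Finset.prod_congr rfl fun j _ => ?_
  have hqj : q ^ j ≠ 0 := pow_ne_zero _ hq
  rw [inv_pow]
  field_simp
  ring

lemma prodsq (q : ℂ) (n : ℕ) :
    (∏ j ∈ Finset.range n, q ^ j) * (∏ j ∈ Finset.range n, q ^ j) = q ^ (n * (n-1)) := by
  rw [Finset.prod_pow_eq_pow_sum, ← pow_add]
  congr 1
  have := Finset.sum_range_id_mul_two n
  omega

lemma keyLemma (q a b c z : ℂ) (hq : q ≠ 0) (ha : a ≠ 0) (hb : b ≠ 0) (hc : c ≠ 0)
    (hz : z ≠ 0) (n k : ℕ) :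
    ((b*c)^n * q^(n*(n-1)) * ((a⁻¹)^n)⁻¹ * qPoch q⁻¹ (a⁻¹*b⁻¹) n * qPoch q⁻¹ (a⁻¹*c⁻¹) n) *
      ((qPoch q⁻¹ (((q⁻¹)^n)⁻¹) k * qPoch q⁻¹ (a⁻¹ * z) k * qPoch q⁻¹ (a⁻¹ * z⁻¹) k * (q⁻¹)^k) /
        (qPoch q⁻¹ (a⁻¹*b⁻¹) k * qPoch q⁻¹ (a⁻¹*c⁻¹) k * qPoch q⁻¹ q⁻¹ k))
    = ((a^n)⁻¹ * qPoch q (a*b) n * qPoch q (a*c) n) *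
      ((qPoch q ((q^n)⁻¹) k * (b*c*q^n*q⁻¹)^k * qPoch q (a*z) k * qPoch q (a*z⁻¹) k * q^k) /
        (qPoch q (a*b) k * qPoch q (a*c) k * qPoch q q k)) := by
  have hab : (a⁻¹*b⁻¹ : ℂ) ≠ 0 := by simp [ha, hb]
  have hac : (a⁻¹*c⁻¹ : ℂ) ≠ 0 := by simp [ha, hc]
  have hqn : (((q⁻¹)^n)⁻¹ : ℂ) ≠ 0 := by simp [hq]
  have haz : (a⁻¹*z : ℂ) ≠ 0 := by simp [ha, hz]
  have hazi : (a⁻¹*z⁻¹ : ℂ) ≠ 0 := by simp [ha, hz]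
  have hqq : (q⁻¹ : ℂ) ≠ 0 := by simp [hq]
  simp only [qPoch_inv_eq q (a⁻¹*b⁻¹) hq hab, qPoch_inv_eq q (a⁻¹*c⁻¹) hq hac,
    qPoch_inv_eq q (((q⁻¹)^n)⁻¹) hq hqn, qPoch_inv_eq q (a⁻¹*z) hq haz,
    qPoch_inv_eq q (a⁻¹*z⁻¹) hq hazi, qPoch_inv_eq q q⁻¹ hq hqq]
  simp only [inv_inv, mul_inv, inv_pow]
  rw [← prodsq q n]
  by_cases h1 : qPoch q (a*b) k = 0
  · simp [h1]
  by_cases h2 : qPoch q (a*c) k = 0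
  · simp [h2]
  by_cases h3 : qPoch q q k = 0
  · simp [h3]
  have hek : (∏ j ∈ Finset.range k, q ^ j) ≠ 0 :=
    Finset.prod_ne_zero_iff.2 fun j _ => pow_ne_zero _ hq
  have hen : (∏ j ∈ Finset.range n, q ^ j) ≠ 0 :=
    Finset.prod_ne_zero_iff.2 fun j _ => pow_ne_zero _ hq
  have h1' : qPoch q (b*a) k ≠ 0 := by rwa [mul_comm]
  have h2' : qPoch q (c*a) k ≠ 0 := by rwa [mul_comm]
  rcases Nat.even_or_odd n with hn | hn <;> rcases Nat.even_or_odd k with hk | hk <;>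
    simp only [hn.neg_one_pow, hk.neg_one_pow, mul_pow, inv_pow] <;> field_simp

lemma identLemma (q a b c : ℂ) (hq : q ≠ 0) (ha : a ≠ 0) (hb : b ≠ 0) (hc : c ≠ 0)
    (x : ℂ) (hz : awz x ≠ 0) (n : ℕ) :
    (b*c)^n * q^(n*(n-1)) * dualQHahn q⁻¹ a⁻¹ b⁻¹ c⁻¹ n x
    = ((a^n)⁻¹ * qPoch q (a*b) n * qPoch q (a*c) n) *
      ∑ k ∈ Finset.range (n+1),
        (qPoch q ((q^n)⁻¹) k * (b*c*q^n*q⁻¹)^k * qPoch q (a*awz x) k *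
            qPoch q (a*(awz x)⁻¹) k * q^k) /
          (qPoch q (a*b) k * qPoch q (a*c) k * qPoch q q k) := by
  rw [dualQHahn]
  calc
    (b*c)^n * q^(n*(n-1)) *
        (((a⁻¹)^n)⁻¹ * qPoch q⁻¹ (a⁻¹*b⁻¹) n * qPoch q⁻¹ (a⁻¹*c⁻¹) n *
          ∑ k ∈ Finset.range (n+1),
            (qPoch q⁻¹ (((q⁻¹)^n)⁻¹) k * qPoch q⁻¹ (a⁻¹ * awz x) k *
                qPoch q⁻¹ (a⁻¹ * (awz x)⁻¹) k * (q⁻¹)^k) /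
              (qPoch q⁻¹ (a⁻¹*b⁻¹) k * qPoch q⁻¹ (a⁻¹*c⁻¹) k * qPoch q⁻¹ q⁻¹ k))
      = ((b*c)^n * q^(n*(n-1)) * ((a⁻¹)^n)⁻¹ * qPoch q⁻¹ (a⁻¹*b⁻¹) n *
            qPoch q⁻¹ (a⁻¹*c⁻¹) n) *
          ∑ k ∈ Finset.range (n+1),
            (qPoch q⁻¹ (((q⁻¹)^n)⁻¹) k * qPoch q⁻¹ (a⁻¹ * awz x) k *
                qPoch q⁻¹ (a⁻¹ * (awz x)⁻¹) k * (q⁻¹)^k) /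
              (qPoch q⁻¹ (a⁻¹*b⁻¹) k * qPoch q⁻¹ (a⁻¹*c⁻¹) k * qPoch q⁻¹ q⁻¹ k) := by
        ring
    _ = ∑ k ∈ Finset.range (n+1),
          ((b*c)^n * q^(n*(n-1)) * ((a⁻¹)^n)⁻¹ * qPoch q⁻¹ (a⁻¹*b⁻¹) n *
              qPoch q⁻¹ (a⁻¹*c⁻¹) n) *
            ((qPoch q⁻¹ (((q⁻¹)^n)⁻¹) k * qPoch q⁻¹ (a⁻¹ * awz x) k *
                qPoch q⁻¹ (a⁻¹ * (awz x)⁻¹) k * (q⁻¹)^k) /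
              (qPoch q⁻¹ (a⁻¹*b⁻¹) k * qPoch q⁻¹ (a⁻¹*c⁻¹) k * qPoch q⁻¹ q⁻¹ k)) := by
        rw [Finset.mul_sum]
    _ = ∑ k ∈ Finset.range (n+1),
          ((a^n)⁻¹ * qPoch q (a*b) n * qPoch q (a*c) n) *
            ((qPoch q ((q^n)⁻¹) k * (b*c*q^n*q⁻¹)^k * qPoch q (a*awz x) k *
                qPoch q (a*(awz x)⁻¹) k * q^k) /
              (qPoch q (a*b) k * qPoch q (a*c) k * qPoch q q k)) := by
        exact Finset.sum_congr rfl fun k _ => keyLemma q a b c (awz x) hq ha hb hc hz n k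
    _ = ((a^n)⁻¹ * qPoch q (a*b) n * qPoch q (a*c) n) *
          ∑ k ∈ Finset.range (n+1),
            (qPoch q ((q^n)⁻¹) k * (b*c*q^n*q⁻¹)^k * qPoch q (a*awz x) k *
                qPoch q (a*(awz x)⁻¹) k * q^k) /
              (qPoch q (a*b) k * qPoch q (a*c) k * qPoch q q k) := by
        rw [Finset.mul_sum]

lemma tend1 (α β : ℂ) (hβ : β ≠ 0) :
    Tendsto (fun d : ℝ => (1 - α*(d:ℂ))/(1 - β*(d:ℂ))) atTop (nhds (α/β)) := by
  have h0 : Tendsto (fun d : ℝ => ((d:ℂ))⁻¹) atTop (nhds 0) := by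
    have : Tendsto (fun d : ℝ => ((d⁻¹ : ℝ) : ℂ)) atTop (nhds ((0:ℝ):ℂ)) :=
      (Complex.continuous_ofReal.tendsto _).comp tendsto_inv_atTop_zero
    simpa using this
  have h1 : Tendsto (fun d : ℝ => (((d:ℂ))⁻¹ - α)/(((d:ℂ))⁻¹ - β)) atTop
      (nhds ((0 - α)/(0 - β))) :=
    Tendsto.div (h0.sub_const α) (h0.sub_const β) (by simpa using hβ)
  have h2 : (0 - α)/(0 - β) = α/β := by
    rw [zero_sub, zero_sub, neg_div_neg_eq]
  rw [h2] at h1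
  apply h1.congr'
  filter_upwards [eventually_gt_atTop 0] with d hd
  have hd0 : (d:ℂ) ≠ 0 := by exact_mod_cast hd.ne'
  field_simp

theorem stmt6 (q : ℝ) (hq0 : 0 < q) (hq1 : q ≠ 1) (n : ℕ)
    (a b c : ℂ) (ha : a ≠ 0) (hb : b ≠ 0) (hc : c ≠ 0) (x : ℂ) :
    Filter.Tendsto
      (fun d : ℝ => askeyWilson (q : ℂ) a b c (d : ℂ) n x / qPoch (q : ℂ) (a * (d : ℂ)) n)
      Filter.atTop
      (nhds ((b * c) ^ n * (q : ℂ) ^ (n * (n - 1)) *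
        dualQHahn ((q : ℂ))⁻¹ a⁻¹ b⁻¹ c⁻¹ n x)) := by
  have hq : (q : ℂ) ≠ 0 := by
    simpa using Complex.ofReal_ne_zero.2 hq0.ne'
  -- awz x is nonzero
  have hs : ((x^2 - 1) ^ ((1:ℂ)/2))^2 = x^2 - 1 := by
    have h2 : ((1:ℂ)/2) = (((2:ℕ):ℂ))⁻¹ := by norm_num
    rw [h2]
    exact Complex.cpow_nat_inv_pow _ (by norm_num)
  have hmul : awz x * (x - (x^2 - 1) ^ ((1:ℂ)/2)) = 1 := by
    rw [awz]; linear_combination -hs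
  have hz : awz x ≠ 0 := left_ne_zero_of_mul_eq_one hmul
  -- the limit identity
  have hident := identLemma (q:ℂ) a b c hq ha hb hc x hz n
  rw [hident]
  -- per-term limits
  have hterm : ∀ k ∈ Finset.range (n+1),
      Tendsto (fun d : ℝ =>
        (qPoch (q:ℂ) (((q:ℂ)^n)⁻¹) k * qPoch (q:ℂ) (a*b*c*(d:ℂ)*(q:ℂ)^n*(q:ℂ)⁻¹) k *
            qPoch (q:ℂ) (a*awz x) k * qPoch (q:ℂ) (a*(awz x)⁻¹) k * (q:ℂ)^k) /
          (qPoch (q:ℂ) (a*b) k * qPoch (q:ℂ) (a*c) k * qPoch (q:ℂ) (a*(d:ℂ)) k *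
            qPoch (q:ℂ) (q:ℂ) k))
        atTop
        (nhds ((qPoch (q:ℂ) (((q:ℂ)^n)⁻¹) k * (b*c*(q:ℂ)^n*(q:ℂ)⁻¹)^k *
            qPoch (q:ℂ) (a*awz x) k * qPoch (q:ℂ) (a*(awz x)⁻¹) k * (q:ℂ)^k) /
          (qPoch (q:ℂ) (a*b) k * qPoch (q:ℂ) (a*c) k * qPoch (q:ℂ) (q:ℂ) k))) := by
    intro k _
    have hratio : Tendsto (fun d : ℝ =>
        qPoch (q:ℂ) (a*b*c*(d:ℂ)*(q:ℂ)^n*(q:ℂ)⁻¹) k / qPoch (q:ℂ) (a*(d:ℂ)) k)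
        atTop (nhds ((b*c*(q:ℂ)^n*(q:ℂ)⁻¹)^k)) := by
      have h1 : ∀ d : ℝ,
          qPoch (q:ℂ) (a*b*c*(d:ℂ)*(q:ℂ)^n*(q:ℂ)⁻¹) k / qPoch (q:ℂ) (a*(d:ℂ)) k
          = ∏ j ∈ Finset.range k,
              ((1 - (a*b*c*(q:ℂ)^n*(q:ℂ)⁻¹*(q:ℂ)^j)*(d:ℂ))/(1 - (a*(q:ℂ)^j)*(d:ℂ))) := by
        intro d
        rw [qPoch, qPoch, ← Finset.prod_div_distrib]
        exact Finset.prod_congr rfl fun j _ => by ring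
      have h2 : Tendsto (fun d : ℝ => ∏ j ∈ Finset.range k,
            ((1 - (a*b*c*(q:ℂ)^n*(q:ℂ)⁻¹*(q:ℂ)^j)*(d:ℂ))/(1 - (a*(q:ℂ)^j)*(d:ℂ))))
          atTop (nhds (∏ j ∈ Finset.range k,
            ((a*b*c*(q:ℂ)^n*(q:ℂ)⁻¹*(q:ℂ)^j)/(a*(q:ℂ)^j)))) :=
        tendsto_finset_prod _ fun j _ =>
          tend1 _ _ (mul_ne_zero ha (pow_ne_zero _ hq))
      have h3 : (∏ j ∈ Finset.range k,
          ((a*b*c*(q:ℂ)^n*(q:ℂ)⁻¹*(q:ℂ)^j)/(a*(q:ℂ)^j))) = (b*c*(q:ℂ)^n*(q:ℂ)⁻¹)^k := by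
        rw [show (∏ j ∈ Finset.range k,
            ((a*b*c*(q:ℂ)^n*(q:ℂ)⁻¹*(q:ℂ)^j)/(a*(q:ℂ)^j)))
            = ∏ _j ∈ Finset.range k, (b*c*(q:ℂ)^n*(q:ℂ)⁻¹) from
          Finset.prod_congr rfl fun j _ => by
            have : a*(q:ℂ)^j ≠ 0 := mul_ne_zero ha (pow_ne_zero _ hq)
            field_simp]
        rw [Finset.prod_const, Finset.card_range]
      rw [← h3]
      exact h2.congr fun d => (h1 d).symm
    have hfe : (fun d : ℝ =>
        (qPoch (q:ℂ) (((q:ℂ)^n)⁻¹) k * qPoch (q:ℂ) (a*b*c*(d:ℂ)*(q:ℂ)^n*(q:ℂ)⁻¹) k *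
            qPoch (q:ℂ) (a*awz x) k * qPoch (q:ℂ) (a*(awz x)⁻¹) k * (q:ℂ)^k) /
          (qPoch (q:ℂ) (a*b) k * qPoch (q:ℂ) (a*c) k * qPoch (q:ℂ) (a*(d:ℂ)) k *
            qPoch (q:ℂ) (q:ℂ) k))
        = fun d : ℝ =>
          ((qPoch (q:ℂ) (((q:ℂ)^n)⁻¹) k * qPoch (q:ℂ) (a*awz x) k *
              qPoch (q:ℂ) (a*(awz x)⁻¹) k * (q:ℂ)^k) /
            (qPoch (q:ℂ) (a*b) k * qPoch (q:ℂ) (a*c) k * qPoch (q:ℂ) (q:ℂ) k)) *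
          (qPoch (q:ℂ) (a*b*c*(d:ℂ)*(q:ℂ)^n*(q:ℂ)⁻¹) k / qPoch (q:ℂ) (a*(d:ℂ)) k) :=
      funext fun d => by ring
    rw [hfe, show (qPoch (q:ℂ) (((q:ℂ)^n)⁻¹) k * (b*c*(q:ℂ)^n*(q:ℂ)⁻¹)^k *
            qPoch (q:ℂ) (a*awz x) k * qPoch (q:ℂ) (a*(awz x)⁻¹) k * (q:ℂ)^k) /
          (qPoch (q:ℂ) (a*b) k * qPoch (q:ℂ) (a*c) k * qPoch (q:ℂ) (q:ℂ) k)
        = ((qPoch (q:ℂ) (((q:ℂ)^n)⁻¹) k * qPoch (q:ℂ) (a*awz x) k *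
              qPoch (q:ℂ) (a*(awz x)⁻¹) k * (q:ℂ)^k) /
            (qPoch (q:ℂ) (a*b) k * qPoch (q:ℂ) (a*c) k * qPoch (q:ℂ) (q:ℂ) k)) *
          ((b*c*(q:ℂ)^n*(q:ℂ)⁻¹)^k) from by ring]
    exact hratio.const_mul _
  have hsum := tendsto_finset_sum (Finset.range (n+1)) hterm
  have hg := hsum.const_mul ((a^n)⁻¹ * qPoch (q:ℂ) (a*b) n * qPoch (q:ℂ) (a*c) n)
  apply hg.congr'
  -- eventual equality
  have hj : ∀ j : ℕ, ∀ᶠ d : ℝ in atTop, (1 : ℂ) - (a*(d:ℂ))*(q:ℂ)^j ≠ 0 := by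
    intro j
    filter_upwards [eventually_gt_atTop ((a*(q:ℂ)^j)⁻¹).re] with d hd heq
    have h4 : (d:ℂ) * (a*(q:ℂ)^j) = 1 := by linear_combination -heq
    have h5 : (d:ℂ) = (a*(q:ℂ)^j)⁻¹ := eq_inv_of_mul_eq_one_left h4
    have h6 : d = ((a*(q:ℂ)^j)⁻¹).re := by
      rw [← h5, Complex.ofReal_re]
    exact hd.ne' h6
  have hPad : ∀ᶠ d : ℝ in atTop, qPoch (q:ℂ) (a*(d:ℂ)) n ≠ 0 := by
    have := (Filter.eventually_all_finset (Finset.range n)).2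
      (fun j _ => hj j)
    filter_upwards [this] with d hd
    rw [qPoch]
    exact Finset.prod_ne_zero_iff.2 fun j hjj => hd j hjj
  filter_upwards [hPad] with d hPd
  rw [askeyWilson, eq_div_iff hPd]
  ring
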